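/- arXiv:1010.5286 — 3 statements merged into one kernel-verified Lean document; each statement's English description precedes it below -/
import Mathlib

section
/- Let Ω = M × (−h,0) with M = (0,1)². Let τ be a smooth solution on [0, T] of ∂_t τ + v·∇_H τ + w ∂_z τ − (1/R₃) ∂_{zz} τ = g with g ≤ 0 pointwise, where the velocity field (v, w) is divergence free (∇_H·v + ∂_z w = 0), periodic horizontally, with w = 0 at z = 0 and z = −h, and τ satisfies τ(z=0) = τ(z=−h) ≤ 0 and τ(·, 0) ≤ 0. Then τ(·, t) ≤ 0 for all t ∈ [0, T]. -/
open MeasureTheory Real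

noncomputable section

/-- Smoothness of a function of four real variables (time and space). -/
def Smooth4 (f : ℝ → ℝ → ℝ → ℝ → ℝ) : Prop :=
  ContDiff ℝ (⊤ : ℕ∞) (fun p : ℝ × ℝ × ℝ × ℝ => f p.1 p.2.1 p.2.2.1 p.2.2.2)

/-- Horizontal periodicity (period 1 in `x` and `y`) for all times. -/
def Per4 (f : ℝ → ℝ → ℝ → ℝ → ℝ) : Prop :=
  ∀ t x y z : ℝ, f t (x + 1) y z = f t x y z ∧ f t x (y + 1) z = f t x y z

/-- Time derivative. -/
def dT (f : ℝ → ℝ → ℝ → ℝ → ℝ) (t x y z : ℝ) : ℝ := deriv (fun s => f s x y z) t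

/-- Partial derivative in `x`. -/
def dX4 (f : ℝ → ℝ → ℝ → ℝ → ℝ) (t x y z : ℝ) : ℝ := deriv (fun s => f t s y z) x

/-- Partial derivative in `y`. -/
def dY4 (f : ℝ → ℝ → ℝ → ℝ → ℝ) (t x y z : ℝ) : ℝ := deriv (fun s => f t x s z) y

/-- Partial derivative in `z`. -/
def dZ4 (f : ℝ → ℝ → ℝ → ℝ → ℝ) (t x y z : ℝ) : ℝ := deriv (fun s => f t x y s) z

/-! At a maximum of `τ - ε t` over `[0, T] × ℝ² × [-h, 0]` (which exists by compactness, using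
horizontal periodicity) that is positive, `t > 0` by the initial condition and `z` is interior by
the boundary conditions. There `∂_t τ ≥ ε`, the gradient vanishes and `∂_{zz} τ ≤ 0`, so the
left-hand side of the equation is at least `ε > 0 ≥ g`, a contradiction. Hence `τ ≤ ε t` for every
`ε > 0`, and letting `ε → 0` gives `τ ≤ 0`. -/

open Set Filter Topology

lemma deriv_nonneg_of_forall_Icc_le {f : ℝ → ℝ} {a b : ℝ} (hab : a < b)
    (hf : DifferentiableAt ℝ f b) (hmax : ∀ s ∈ Icc a b, f s ≤ f b) : 0 ≤ deriv f b := by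
  have hloc : IsLocalMaxOn f (Icc a b) b := eventually_of_mem self_mem_nhdsWithin hmax
  have htangent : a - b ∈ posTangentConeAt (Icc a b) b :=
    sub_mem_posTangentConeAt_of_segment_subset (segment_symm ℝ a b ▸ segment_subset_Icc hab.le)
  have hle := hloc.hasFDerivWithinAt_nonpos hf.hasDerivAt.hasFDerivAt.hasFDerivWithinAt htangent
  simp only [ContinuousLinearMap.toSpanSingleton_apply, smul_eq_mul] at hle
  nlinarith

/-- If `f'' x₀ > 0`, the second-derivative test makes `x₀` also a local minimum, so `f` is
locally constant near `x₀` and `f'' x₀ = 0`. -/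
lemma IsLocalMax.deriv_deriv_nonpos {f : ℝ → ℝ} {x₀ : ℝ} (hmax : IsLocalMax f x₀)
    (hf : ContinuousAt f x₀) : deriv (deriv f) x₀ ≤ 0 := by
  by_contra! hpos
  have hmin := isLocalMin_of_deriv_deriv_pos hpos hmax.deriv_eq_zero hf
  have hconst : f =ᶠ[𝓝 x₀] fun _ => f x₀ :=
    (hmax.and hmin).mono fun _ hx => le_antisymm hx.1 hx.2
  have hderiv : deriv f =ᶠ[𝓝 x₀] fun _ => 0 := by
    simpa only [deriv_const'] using hconst.deriv
  simp [hderiv.deriv_eq] at hpos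

namespace Smooth4

variable {f : ℝ → ℝ → ℝ → ℝ → ℝ}

lemma differentiable_time (hf : Smooth4 f) (x y z : ℝ) :
    Differentiable ℝ (fun t => f t x y z) :=
  (ContDiff.comp hf (f := fun t : ℝ => (t, x, y, z)) (by fun_prop)).differentiable (by simp)

lemma continuous_vertical (hf : Smooth4 f) (t x y : ℝ) : Continuous (fun z => f t x y z) :=
  (ContDiff.comp hf (f := fun z : ℝ => (t, x, y, z)) (by fun_prop)).continuous

end Smooth4

namespace Per4

variable {f : ℝ → ℝ → ℝ → ℝ → ℝ}

lemma exists_mem_unit_square (hf : Per4 f) (t x y z : ℝ) :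
    ∃ x' ∈ Icc (0 : ℝ) 1, ∃ y' ∈ Icc (0 : ℝ) 1, f t x y z = f t x' y' z := by
  obtain ⟨x', hx', hx⟩ := Function.Periodic.exists_mem_Ico₀ (f := fun x => f t x y z)
    (fun x => (hf t x y z).1) one_pos x
  obtain ⟨y', hy', hy⟩ := Function.Periodic.exists_mem_Ico₀ (f := fun y => f t x' y z)
    (fun y => (hf t x' y z).2) one_pos y
  exact ⟨x', Ico_subset_Icc_self hx', y', Ico_subset_Icc_self hy', hx.trans hy⟩

lemma exists_forall_le (hf : Per4 f)
    (hc : Continuous fun p : ℝ × ℝ × ℝ × ℝ => f p.1 p.2.1 p.2.2.1 p.2.2.2)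
    {A B : Set ℝ} (hA : IsCompact A) (hB : IsCompact B) (hAne : A.Nonempty) (hBne : B.Nonempty) :
    ∃ t₀ ∈ A, ∃ x₀ y₀ : ℝ, ∃ z₀ ∈ B, ∀ t ∈ A, ∀ x y : ℝ, ∀ z ∈ B,
      f t x y z ≤ f t₀ x₀ y₀ z₀ := by
  obtain ⟨⟨t₀, x₀, y₀, z₀⟩, ⟨ht₀, -, -, hz₀⟩, hmax⟩ :=
    (hA.prod (isCompact_Icc.prod (isCompact_Icc.prod hB))).exists_isMaxOn
      (hAne.prod ((nonempty_Icc.2 zero_le_one).prod ((nonempty_Icc.2 zero_le_one).prod hBne)))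
      (s := A ×ˢ Icc (0 : ℝ) 1 ×ˢ Icc (0 : ℝ) 1 ×ˢ B) hc.continuousOn
  refine ⟨t₀, ht₀, x₀, y₀, z₀, hz₀, fun t ht x y z hz => ?_⟩
  obtain ⟨x', hx', y', hy', hxy⟩ := hf.exists_mem_unit_square t x y z
  exact hxy ▸ hmax (show (t, x', y', z) ∈ _ from ⟨ht, hx', hy', hz⟩)

end Per4

lemma le_transport_diffusion_of_isMax {τ v₁ v₂ w : ℝ → ℝ → ℝ → ℝ → ℝ}
    {R₃ ε t₀ x₀ y₀ z₀ : ℝ} (hR : 0 ≤ R₃) (ht₀ : 0 < t₀)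
    (hdiff : DifferentiableAt ℝ (fun t => τ t x₀ y₀ z₀) t₀)
    (hcont : ContinuousAt (fun z => τ t₀ x₀ y₀ z) z₀)
    (hmax_t : ∀ t ∈ Icc 0 t₀, τ t x₀ y₀ z₀ - ε * t ≤ τ t₀ x₀ y₀ z₀ - ε * t₀)
    (hmax_x : IsLocalMax (fun x => τ t₀ x y₀ z₀) x₀)
    (hmax_y : IsLocalMax (fun y => τ t₀ x₀ y z₀) y₀)
    (hmax_z : IsLocalMax (fun z => τ t₀ x₀ y₀ z) z₀) :
    ε ≤ dT τ t₀ x₀ y₀ z₀ + v₁ t₀ x₀ y₀ z₀ * dX4 τ t₀ x₀ y₀ z₀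
      + v₂ t₀ x₀ y₀ z₀ * dY4 τ t₀ x₀ y₀ z₀ + w t₀ x₀ y₀ z₀ * dZ4 τ t₀ x₀ y₀ z₀
      - (1 / R₃) * dZ4 (dZ4 τ) t₀ x₀ y₀ z₀ := by
  have hdt : 0 ≤ dT τ t₀ x₀ y₀ z₀ - ε := by
    have hsub : HasDerivAt (fun t => τ t x₀ y₀ z₀ - ε * t) (dT τ t₀ x₀ y₀ z₀ - ε) t₀ :=
      hdiff.hasDerivAt.sub (by simpa using (hasDerivAt_id t₀).const_mul ε)
    exact hsub.deriv ▸ deriv_nonneg_of_forall_Icc_le ht₀ hsub.differentiableAt hmax_t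
  have hdx : dX4 τ t₀ x₀ y₀ z₀ = 0 := hmax_x.deriv_eq_zero
  have hdy : dY4 τ t₀ x₀ y₀ z₀ = 0 := hmax_y.deriv_eq_zero
  have hdz : dZ4 τ t₀ x₀ y₀ z₀ = 0 := hmax_z.deriv_eq_zero
  have hdzz : dZ4 (dZ4 τ) t₀ x₀ y₀ z₀ ≤ 0 := hmax_z.deriv_deriv_nonpos hcont
  have hdiffusion : 0 ≤ (1 / R₃) * -dZ4 (dZ4 τ) t₀ x₀ y₀ z₀ :=
    mul_nonneg (by positivity) (neg_nonneg.2 hdzz)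
  rw [hdx, hdy, hdz]
  linarith

lemma le_mul_time_of_transport_diffusion_le_zero {h R₃ T ε : ℝ} (hR : 0 ≤ R₃) (hε : 0 < ε)
    {τ v₁ v₂ w g : ℝ → ℝ → ℝ → ℝ → ℝ} (hτ : Smooth4 τ) (hpτ : Per4 τ)
    (hgle : ∀ t x y z : ℝ, g t x y z ≤ 0)
    (hpde : ∀ t ∈ Icc (0:ℝ) T, ∀ x y : ℝ, ∀ z ∈ Icc (-h) (0:ℝ),
      dT τ t x y z + v₁ t x y z * dX4 τ t x y z + v₂ t x y z * dY4 τ t x y z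
        + w t x y z * dZ4 τ t x y z - (1 / R₃) * dZ4 (dZ4 τ) t x y z = g t x y z)
    (hbtop : ∀ t ∈ Icc (0:ℝ) T, ∀ x y : ℝ, τ t x y 0 ≤ 0)
    (hbbot : ∀ t ∈ Icc (0:ℝ) T, ∀ x y : ℝ, τ t x y (-h) ≤ 0)
    (hinit : ∀ x y : ℝ, ∀ z ∈ Icc (-h) (0:ℝ), τ 0 x y z ≤ 0) :
    ∀ t ∈ Icc (0:ℝ) T, ∀ x y : ℝ, ∀ z ∈ Icc (-h) (0:ℝ), τ t x y z ≤ ε * t := by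
  intro t ht x y z hz
  have hper : Per4 fun t x y z => τ t x y z - ε * t := fun t x y z => by
    simp only [(hpτ t x y z).1, (hpτ t x y z).2, and_self]
  obtain ⟨t₀, ht₀, x₀, y₀, z₀, hz₀, hmax⟩ := hper.exists_forall_le
    (hτ.continuous.sub (continuous_const.mul continuous_fst)) isCompact_Icc isCompact_Icc
    ⟨t, ht⟩ ⟨z, hz⟩
  suffices τ t₀ x₀ y₀ z₀ - ε * t₀ ≤ 0 by linarith [hmax t ht x y z hz]
  by_contra! hpos
  have ht₀pos : 0 < t₀ :=
    ht₀.1.lt_of_ne fun h0 => by subst h0; linarith [hinit x₀ y₀ z₀ hz₀]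
  have hτpos : 0 < τ t₀ x₀ y₀ z₀ := by nlinarith
  have hz₀bot : -h < z₀ := hz₀.1.lt_of_ne fun hb => by
    subst hb; linarith [hbbot t₀ ht₀ x₀ y₀]
  have hz₀top : z₀ < 0 := hz₀.2.lt_of_ne fun hb => by
    subst hb; linarith [hbtop t₀ ht₀ x₀ y₀]
  have hL := le_transport_diffusion_of_isMax (v₁ := v₁) (v₂ := v₂) (w := w) hR ht₀pos
    (hτ.differentiable_time x₀ y₀ z₀ t₀) (hτ.continuous_vertical t₀ x₀ y₀).continuousAt
    (fun s hs => hmax s ⟨hs.1, hs.2.trans ht₀.2⟩ x₀ y₀ z₀ hz₀)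
    (Eventually.of_forall fun x => by linarith [hmax t₀ ht₀ x y₀ z₀ hz₀])
    (Eventually.of_forall fun y => by linarith [hmax t₀ ht₀ x₀ y z₀ hz₀])
    (eventually_of_mem (Ioo_mem_nhds hz₀bot hz₀top) fun z hz => by
      linarith [hmax t₀ ht₀ x₀ y₀ z (Ioo_subset_Icc_self hz)])
  linarith [hpde t₀ ht₀ x₀ y₀ z₀ hz₀, hgle t₀ x₀ y₀ z₀]

theorem vertical_diffusion_maximum_principle_general
    (h R₃ T : ℝ) (hR : 0 < R₃)
    (τ v₁ v₂ w g : ℝ → ℝ → ℝ → ℝ → ℝ)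
    (hτ : Smooth4 τ)
    (hpτ : Per4 τ)
    (hgle : ∀ t x y z : ℝ, g t x y z ≤ 0)
    (hpde : ∀ t ∈ Set.Icc (0:ℝ) T, ∀ x y : ℝ, ∀ z ∈ Set.Icc (-h) (0:ℝ),
      dT τ t x y z + v₁ t x y z * dX4 τ t x y z + v₂ t x y z * dY4 τ t x y z
        + w t x y z * dZ4 τ t x y z - (1 / R₃) * dZ4 (dZ4 τ) t x y z = g t x y z)
    (hbtop : ∀ t ∈ Set.Icc (0:ℝ) T, ∀ x y : ℝ, τ t x y 0 ≤ 0)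
    (hbbot : ∀ t ∈ Set.Icc (0:ℝ) T, ∀ x y : ℝ, τ t x y (-h) ≤ 0)
    (hinit : ∀ x y : ℝ, ∀ z ∈ Set.Icc (-h) (0:ℝ), τ 0 x y z ≤ 0) :
    ∀ t ∈ Set.Icc (0:ℝ) T, ∀ x y : ℝ, ∀ z ∈ Set.Icc (-h) (0:ℝ),
      τ t x y z ≤ 0 := by
  intro t ht x y z hz
  refine le_of_forall_pos_le_add fun δ hδ => ?_
  have hbound := le_mul_time_of_transport_diffusion_le_zero hR.le (ε := δ / (t + 1))
    (by have := ht.1; positivity) hτ hpτ hgle hpde hbtop hbbot hinit t ht x y z hz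
  calc τ t x y z ≤ δ / (t + 1) * t := hbound
    _ ≤ 0 + δ := by
      rw [zero_add, div_mul_eq_mul_div, div_le_iff₀ (by linarith [ht.1])]
      nlinarith

/-- Maximum principle for advection with only vertical diffusion on
`Ω = (0,1)² × (−h,0)`: if `∂_t τ + v·∇_H τ + w ∂_z τ − (1/R₃) ∂_{zz} τ = g ≤ 0`, the
velocity is divergence free with `w = 0` at `z = 0, −h`, and `τ ≤ 0` on the top and
bottom boundaries and initially, then `τ ≤ 0` on `[0, T]`. -/
theorem vertical_diffusion_maximum_principle
    (h R₃ T : ℝ) (hh : 0 < h) (hR : 0 < R₃) (hT : 0 < T)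
    (τ v₁ v₂ w g : ℝ → ℝ → ℝ → ℝ → ℝ)
    (hτ : Smooth4 τ) (hv₁ : Smooth4 v₁) (hv₂ : Smooth4 v₂) (hw : Smooth4 w)
    (hg : Smooth4 g)
    (hpτ : Per4 τ) (hpv₁ : Per4 v₁) (hpv₂ : Per4 v₂) (hpw : Per4 w) (hpg : Per4 g)
    (hgle : ∀ t x y z : ℝ, g t x y z ≤ 0)
    (hdiv : ∀ t x y z : ℝ, dX4 v₁ t x y z + dY4 v₂ t x y z + dZ4 w t x y z = 0)
    (hwtop : ∀ t x y : ℝ, w t x y 0 = 0)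
    (hwbot : ∀ t x y : ℝ, w t x y (-h) = 0)
    (hpde : ∀ t ∈ Set.Icc (0:ℝ) T, ∀ x y : ℝ, ∀ z ∈ Set.Icc (-h) (0:ℝ),
      dT τ t x y z + v₁ t x y z * dX4 τ t x y z + v₂ t x y z * dY4 τ t x y z
        + w t x y z * dZ4 τ t x y z - (1 / R₃) * dZ4 (dZ4 τ) t x y z = g t x y z)
    (hbtop : ∀ t ∈ Set.Icc (0:ℝ) T, ∀ x y : ℝ, τ t x y 0 ≤ 0)
    (hbbot : ∀ t ∈ Set.Icc (0:ℝ) T, ∀ x y : ℝ, τ t x y (-h) ≤ 0)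
    (hbeq : ∀ t ∈ Set.Icc (0:ℝ) T, ∀ x y : ℝ, τ t x y 0 = τ t x y (-h))
    (hinit : ∀ x y : ℝ, ∀ z ∈ Set.Icc (-h) (0:ℝ), τ 0 x y z ≤ 0) :
    ∀ t ∈ Set.Icc (0:ℝ) T, ∀ x y : ℝ, ∀ z ∈ Set.Icc (-h) (0:ℝ),
      τ t x y z ≤ 0 :=
  vertical_diffusion_maximum_principle_general h R₃ T hR τ v₁ v₂ w g hτ hpτ hgle hpde hbtop hbbot
    hinit
end
end

section
/- Let Ω = M × (−h,0) with M = (0,1)². Suppose T solves ∂_t T + v·∇_H T + w ∂_z T − (1/R₃)∂_{zz} T = Q on [0,t] with divergence-free velocity (∇_H·v + ∂_z w = 0, w vanishing at z=0 and z=−h, horizontal periodicity), and Dirichlet data |T| ≤ 1 on z = 0 and z = −h. Then ‖T(t)‖_{L^∞(Ω)} ≤ 1 + ‖T(0)‖_{L^∞(Ω)} + t ‖Q‖_{L^∞(Ω)}. -/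
/-!
Comparison argument: for `c > ‖Q‖_∞`, the function `T - c s` attains its maximum on the compact
cylinder `[0,t] × [0,1]² × [-h,0]`. At `s = 0` or on `z ∈ {-h, 0}` it is bounded by the data.
Anywhere else the horizontal derivatives vanish (periodicity makes every point of the period
cell a global horizontal maximum), `∂_z T = 0`, `∂_{zz} T ≤ 0` and `∂_t T ≥ c`, so the equation
would force `Q ≥ c`. Hence `T(t) ≤ 1 + ‖T(0)‖_∞ + c t`; let `c ↓ ‖Q‖_∞` and apply the same to `-T`.
-/

open MeasureTheory Real

noncomputable section

/-- `L^∞(Ω)` norm over `Ω = (0,1)² × (−h,0)`. -/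
def SupN3 (h : ℝ) (f : ℝ → ℝ → ℝ → ℝ) : ℝ :=
  ⨆ p : (Set.Ioo (0:ℝ) 1 ×ˢ Set.Ioo (0:ℝ) 1 ×ˢ Set.Ioo (-h) (0:ℝ) : Set (ℝ × ℝ × ℝ)),
    |f p.1.1 p.1.2.1 p.1.2.2|

open Set Filter Topology

lemma Function.Periodic.deriv_eq_zero_of_isMaxOn_Icc {g : ℝ → ℝ} {c x : ℝ}
    (hg : Function.Periodic g c) (hc : 0 < c) (hmax : IsMaxOn g (Icc 0 c) x) :
    deriv g x = 0 := by
  refine IsLocalMax.deriv_eq_zero (Eventually.of_forall fun a => ?_)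
  obtain ⟨b, hb, hab⟩ := hg.exists_mem_Ico₀ hc a
  exact hab ▸ hmax (Ico_subset_Icc_self hb)

/-- If `g'' z > 0`, the second derivative test makes `z` also a local minimum, so `g` is
locally constant and `g'' z = 0`. -/
lemma IsLocalMax.deriv_deriv_nonpos_s16 {g : ℝ → ℝ} {z : ℝ} (hmax : IsLocalMax g z)
    (hg : ContinuousAt g z) : deriv (deriv g) z ≤ 0 := by
  by_contra! hpos
  have hmin : IsLocalMin g z := isLocalMin_of_deriv_deriv_pos hpos hmax.deriv_eq_zero hg
  have hconst : g =ᶠ[𝓝 z] fun _ => g z :=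
    (hmax.and hmin).mono fun a ha => le_antisymm ha.1 ha.2
  have : deriv (deriv g) z = 0 := by
    rw [hconst.deriv.deriv_eq]
    simp
  exact hpos.ne' this

lemma IsMaxOn.deriv_nonneg_of_Icc {g : ℝ → ℝ} {a b : ℝ} (hmax : IsMaxOn g (Icc a b) b)
    (hab : a < b) (hg : DifferentiableAt ℝ g b) : 0 ≤ deriv g b := by
  have hcone : a - b ∈ posTangentConeAt (Icc a b) b :=
    sub_mem_posTangentConeAt_of_segment_subset (by rw [segment_symm, segment_eq_Icc hab.le])
  have h : (a - b) * deriv g b ≤ 0 := by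
    simpa using hmax.localize.hasFDerivWithinAt_nonpos hg.hasFDerivAt.hasFDerivWithinAt hcone
  exact nonneg_of_mul_nonpos_right h (sub_neg.2 hab)

lemma le_ciSup_of_mem_closure {X : Type*} [TopologicalSpace X] {g : X → ℝ} {S : Set X}
    (hg : Continuous g) (hS : BddAbove (g '' S)) {p : X} (hp : p ∈ closure S) :
    g p ≤ ⨆ q : S, g q := by
  rw [image_eq_range] at hS
  exact closure_minimal (fun q hq => le_ciSup hS ⟨q, hq⟩) (isClosed_le hg continuous_const) hp

lemma abs_le_supN3 {h : ℝ} (hh : 0 < h) {f : ℝ → ℝ → ℝ → ℝ}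
    (hf : Continuous fun p : ℝ × ℝ × ℝ => f p.1 p.2.1 p.2.2) :
    ∀ x ∈ Icc (0:ℝ) 1, ∀ y ∈ Icc (0:ℝ) 1, ∀ z ∈ Icc (-h) 0, |f x y z| ≤ SupN3 h f := by
  intro x hx y hy z hz
  have hcl : closure (Ioo (0:ℝ) 1 ×ˢ Ioo (0:ℝ) 1 ×ˢ Ioo (-h) 0)
      = Icc (0:ℝ) 1 ×ˢ Icc (0:ℝ) 1 ×ˢ Icc (-h) 0 := by
    rw [closure_prod_eq, closure_prod_eq, closure_Ioo zero_ne_one, closure_Ioo (by linarith)]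
  have hbdd := (isCompact_Icc.prod (isCompact_Icc.prod isCompact_Icc)).bddAbove_image
    hf.abs.continuousOn |>.mono (image_mono (hcl ▸ subset_closure))
  exact le_ciSup_of_mem_closure hf.abs hbdd (hcl ▸ ⟨hx, hy, hz⟩ : (x, y, z) ∈ _)

lemma supN3_le {h B : ℝ} (hh : 0 < h) {f : ℝ → ℝ → ℝ → ℝ}
    (hB : ∀ x ∈ Ioo (0:ℝ) 1, ∀ y ∈ Ioo (0:ℝ) 1, ∀ z ∈ Ioo (-h) 0, |f x y z| ≤ B) :
    SupN3 h f ≤ B := by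
  have : Nonempty (Ioo (0:ℝ) 1 ×ˢ Ioo (0:ℝ) 1 ×ˢ Ioo (-h) 0 : Set (ℝ × ℝ × ℝ)) :=
    ⟨⟨(1/2, 1/2, -h/2), by norm_num, by norm_num, by linarith, by linarith⟩⟩
  exact ciSup_le fun ⟨⟨x, y, z⟩, hx, hy, hz⟩ => hB x hx y hy z hz

section Smooth4

variable {T : ℝ → ℝ → ℝ → ℝ → ℝ}

lemma Smooth4.hasDerivAt_dT (hT : Smooth4 T) (s x y z : ℝ) :
    HasDerivAt (fun a => T a x y z) (dT T s x y z) s :=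
  ((hT.differentiable (by simp)).comp
    (by fun_prop : Differentiable ℝ fun a : ℝ => (a, x, y, z)) s).hasDerivAt

lemma Smooth4.continuous_vertical_s16 (hT : Smooth4 T) (s x y : ℝ) :
    Continuous fun a => T s x y a :=
  hT.continuous.comp (by fun_prop : Continuous fun a : ℝ => (s, x, y, a))

lemma Smooth4.continuous_slice (hT : Smooth4 T) (s : ℝ) :
    Continuous fun p : ℝ × ℝ × ℝ => T s p.1 p.2.1 p.2.2 :=
  hT.continuous.comp (by fun_prop : Continuous fun p : ℝ × ℝ × ℝ => (s, p))

lemma Smooth4.neg (hT : Smooth4 T) : Smooth4 fun t x y z => -T t x y z :=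
  ContDiff.neg hT

lemma Per4.neg (hpT : Per4 T) : Per4 fun t x y z => -T t x y z :=
  fun t x y z => by simp only [(hpT t x y z).1, (hpT t x y z).2, and_self]

end Smooth4

def spaceTimeBox (h t : ℝ) : Set (ℝ × ℝ × ℝ × ℝ) :=
  Icc 0 t ×ˢ Icc 0 1 ×ˢ Icc 0 1 ×ˢ Icc (-h) 0

section MaximumPrinciple

variable {h R₃ t : ℝ} {T v₁ v₂ w : ℝ → ℝ → ℝ → ℝ → ℝ} {Q : ℝ → ℝ → ℝ → ℝ}

lemma le_pde_operator_of_isMaxOn (hR : 0 < R₃) (hT : Smooth4 T) (hpT : Per4 T) {c s x y z : ℝ}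
    (hs : 0 < s) (hz : z ∈ Ioo (-h) 0)
    (hmax : IsMaxOn (fun p => T p.1 p.2.1 p.2.2.1 p.2.2.2 - c * p.1) (spaceTimeBox h t)
      (s, x, y, z))
    (hp : (s, x, y, z) ∈ spaceTimeBox h t) :
    c ≤ dT T s x y z + v₁ s x y z * dX4 T s x y z + v₂ s x y z * dY4 T s x y z
      + w s x y z * dZ4 T s x y z - (1 / R₃) * dZ4 (dZ4 T) s x y z := by
  obtain ⟨hst, hx, hy, -⟩ := hp
  have hle : ∀ s' x' y' z', (s', x', y', z') ∈ spaceTimeBox h t →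
      T s' x' y' z' - c * s' ≤ T s x y z - c * s := fun _ _ _ _ hp' => hmax hp'
  have hdx : dX4 T s x y z = 0 :=
    Function.Periodic.deriv_eq_zero_of_isMaxOn_Icc (fun a => (hpT s a y z).1) one_pos
      fun a ha => show T s a y z ≤ T s x y z by
        linarith [hle s a y z ⟨hst, ha, hy, Ioo_subset_Icc_self hz⟩]
  have hdy : dY4 T s x y z = 0 :=
    Function.Periodic.deriv_eq_zero_of_isMaxOn_Icc (fun a => (hpT s x a z).2) one_pos
      fun a ha => show T s x a z ≤ T s x y z by
        linarith [hle s x a z ⟨hst, hx, ha, Ioo_subset_Icc_self hz⟩]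
  have hzmax : IsLocalMax (fun a => T s x y a) z :=
    eventually_of_mem (isOpen_Ioo.mem_nhds hz) fun a ha => by
      linarith [hle s x y a ⟨hst, hx, hy, Ioo_subset_Icc_self ha⟩]
  have hdzz : dZ4 (dZ4 T) s x y z ≤ 0 :=
    hzmax.deriv_deriv_nonpos_s16 (hT.continuous_vertical_s16 s x y).continuousAt
  have hdt : c ≤ dT T s x y z := by
    have hψ : HasDerivAt (fun a => T a x y z - c * a) (dT T s x y z - c) s := by
      simpa using (hT.hasDerivAt_dT s x y z).fun_sub ((hasDerivAt_id' s).const_mul c)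
    have hψmax : IsMaxOn (fun a => T a x y z - c * a) (Icc 0 s) s := fun a ha => by
      simpa using hle a x y z ⟨⟨ha.1, ha.2.trans hst.2⟩, hx, hy, Ioo_subset_Icc_self hz⟩
    have := hψmax.deriv_nonneg_of_Icc hs hψ.differentiableAt
    rw [hψ.deriv] at this
    linarith
  have hdz : dZ4 T s x y z = 0 := hzmax.deriv_eq_zero
  have hdiffusion : 0 ≤ (1 / R₃) * -dZ4 (dZ4 T) s x y z :=
    mul_nonneg (by positivity) (neg_nonneg.2 hdzz)
  rw [hdx, hdy, hdz]
  linarith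

lemma le_add_mul_of_pde (hR : 0 < R₃) (ht : 0 ≤ t) (hT : Smooth4 T)
    (hpT : Per4 T) {M₀ MQ c : ℝ} (hM₀ : 0 ≤ M₀) (hc₀ : 0 ≤ c) (hc : MQ < c)
    (hT₀ : ∀ x ∈ Icc (0:ℝ) 1, ∀ y ∈ Icc (0:ℝ) 1, ∀ z ∈ Icc (-h) 0, T 0 x y z ≤ M₀)
    (hQ : ∀ x ∈ Icc (0:ℝ) 1, ∀ y ∈ Icc (0:ℝ) 1, ∀ z ∈ Icc (-h) 0, Q x y z ≤ MQ)
    (hpde : ∀ s ∈ Set.Icc (0:ℝ) t, ∀ x y : ℝ, ∀ z ∈ Set.Icc (-h) (0:ℝ),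
      dT T s x y z + v₁ s x y z * dX4 T s x y z + v₂ s x y z * dY4 T s x y z
        + w s x y z * dZ4 T s x y z - (1 / R₃) * dZ4 (dZ4 T) s x y z = Q x y z)
    (hbtop : ∀ s ∈ Set.Icc (0:ℝ) t, ∀ x y : ℝ, T s x y 0 ≤ 1)
    (hbbot : ∀ s ∈ Set.Icc (0:ℝ) t, ∀ x y : ℝ, T s x y (-h) ≤ 1) :
    ∀ x ∈ Icc (0:ℝ) 1, ∀ y ∈ Icc (0:ℝ) 1, ∀ z ∈ Icc (-h) 0, T t x y z ≤ 1 + M₀ + t * c := by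
  intro x hx y hy z hz
  set F : ℝ × ℝ × ℝ × ℝ → ℝ := fun p => T p.1 p.2.1 p.2.2.1 p.2.2.2 - c * p.1
  have hK : IsCompact (spaceTimeBox h t) :=
    isCompact_Icc.prod (isCompact_Icc.prod (isCompact_Icc.prod isCompact_Icc))
  have hne : (spaceTimeBox h t).Nonempty := ⟨(t, x, y, z), ⟨ht, le_rfl⟩, hx, hy, hz⟩
  obtain ⟨⟨s, x₀, y₀, z₀⟩, hp, hmax⟩ :=
    hK.exists_isMaxOn hne
      (hT.continuous.sub (continuous_const.mul continuous_fst) : Continuous F).continuousOn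
  have hbound : F (s, x₀, y₀, z₀) ≤ 1 + M₀ := by
    obtain ⟨hs, hx₀, hy₀, hz₀⟩ := id hp
    have hcs : 0 ≤ c * s := mul_nonneg hc₀ hs.1
    rcases hs.1.eq_or_lt with rfl | hs₀
    · simp only [F, mul_zero, sub_zero]
      linarith [hT₀ x₀ hx₀ y₀ hy₀ z₀ hz₀]
    rcases hz₀.1.eq_or_lt with rfl | hzb
    · linarith [hbbot s hs x₀ y₀]
    rcases hz₀.2.eq_or_lt with rfl | hzt
    · linarith [hbtop s hs x₀ y₀]
    have hLT := le_pde_operator_of_isMaxOn (v₁ := v₁) (v₂ := v₂) (w := w) hR hT hpT hs₀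
      ⟨hzb, hzt⟩ hmax hp
    rw [hpde s hs x₀ y₀ z₀ hz₀] at hLT
    linarith [hQ x₀ hx₀ y₀ hy₀ z₀ hz₀]
  have hFt : F (t, x, y, z) ≤ 1 + M₀ :=
    le_trans (hmax (⟨⟨ht, le_rfl⟩, hx, hy, hz⟩ : (t, x, y, z) ∈ spaceTimeBox h t)) hbound
  simp only [F] at hFt
  linarith

lemma le_of_pde (hR : 0 < R₃) (ht : 0 ≤ t) (hT : Smooth4 T)
    (hpT : Per4 T) {M₀ MQ : ℝ} (hM₀ : 0 ≤ M₀) (hMQ : 0 ≤ MQ)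
    (hT₀ : ∀ x ∈ Icc (0:ℝ) 1, ∀ y ∈ Icc (0:ℝ) 1, ∀ z ∈ Icc (-h) 0, T 0 x y z ≤ M₀)
    (hQ : ∀ x ∈ Icc (0:ℝ) 1, ∀ y ∈ Icc (0:ℝ) 1, ∀ z ∈ Icc (-h) 0, Q x y z ≤ MQ)
    (hpde : ∀ s ∈ Set.Icc (0:ℝ) t, ∀ x y : ℝ, ∀ z ∈ Set.Icc (-h) (0:ℝ),
      dT T s x y z + v₁ s x y z * dX4 T s x y z + v₂ s x y z * dY4 T s x y z
        + w s x y z * dZ4 T s x y z - (1 / R₃) * dZ4 (dZ4 T) s x y z = Q x y z)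
    (hbtop : ∀ s ∈ Set.Icc (0:ℝ) t, ∀ x y : ℝ, T s x y 0 ≤ 1)
    (hbbot : ∀ s ∈ Set.Icc (0:ℝ) t, ∀ x y : ℝ, T s x y (-h) ≤ 1) :
    ∀ x ∈ Icc (0:ℝ) 1, ∀ y ∈ Icc (0:ℝ) 1, ∀ z ∈ Icc (-h) 0, T t x y z ≤ 1 + M₀ + t * MQ := by
  intro x hx y hy z hz
  have hlim : Tendsto (fun c => 1 + M₀ + t * c) (𝓝[>] MQ) (𝓝 (1 + M₀ + t * MQ)) :=
    ((by fun_prop : Continuous fun c => 1 + M₀ + t * c).tendsto MQ).mono_left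
      nhdsWithin_le_nhds
  exact ge_of_tendsto hlim <| eventually_nhdsWithin_of_forall fun c hc =>
    le_add_mul_of_pde hR ht hT hpT hM₀ (hMQ.trans hc.le) hc hT₀ hQ hpde hbtop hbbot x hx y hy z hz

end MaximumPrinciple

theorem temperature_Linfty_bound_general
    (h R₃ t : ℝ) (hh : 0 < h) (hR : 0 < R₃) (ht : 0 ≤ t)
    (T v₁ v₂ w : ℝ → ℝ → ℝ → ℝ → ℝ) (Q : ℝ → ℝ → ℝ → ℝ)
    (hT : Smooth4 T)
    (hQ : ContDiff ℝ (⊤ : ℕ∞) (fun p : ℝ × ℝ × ℝ => Q p.1 p.2.1 p.2.2))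
    (hpT : Per4 T)
    (hpde : ∀ s ∈ Set.Icc (0:ℝ) t, ∀ x y : ℝ, ∀ z ∈ Set.Icc (-h) (0:ℝ),
      dT T s x y z + v₁ s x y z * dX4 T s x y z + v₂ s x y z * dY4 T s x y z
        + w s x y z * dZ4 T s x y z - (1 / R₃) * dZ4 (dZ4 T) s x y z = Q x y z)
    (hbtop : ∀ s ∈ Set.Icc (0:ℝ) t, ∀ x y : ℝ, |T s x y 0| ≤ 1)
    (hbbot : ∀ s ∈ Set.Icc (0:ℝ) t, ∀ x y : ℝ, |T s x y (-h)| ≤ 1) :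
    SupN3 h (T t) ≤ 1 + SupN3 h (T 0) + t * SupN3 h Q := by
  have hT₀ := abs_le_supN3 hh (hT.continuous_slice 0)
  have hQ₀ := abs_le_supN3 hh hQ.continuous
  have h01 : (0:ℝ) ∈ Icc (0:ℝ) 1 := ⟨le_rfl, zero_le_one⟩
  have h0h : (0:ℝ) ∈ Icc (-h) 0 := ⟨by linarith, le_rfl⟩
  have hM₀ := (abs_nonneg _).trans (hT₀ 0 h01 0 h01 0 h0h)
  have hMQ := (abs_nonneg _).trans (hQ₀ 0 h01 0 h01 0 h0h)
  have hupper := le_of_pde hR ht hT hpT hM₀ hMQ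
    (fun x hx y hy z hz => (le_abs_self _).trans (hT₀ x hx y hy z hz))
    (fun x hx y hy z hz => (le_abs_self _).trans (hQ₀ x hx y hy z hz)) hpde
    (fun s hs x y => (le_abs_self _).trans (hbtop s hs x y))
    (fun s hs x y => (le_abs_self _).trans (hbbot s hs x y))
  have hlower := le_of_pde (v₁ := v₁) (v₂ := v₂) (w := w) (Q := fun x y z => -Q x y z)
    hR ht hT.neg hpT.neg hM₀ hMQ
    (fun x hx y hy z hz => (neg_le_abs _).trans (hT₀ x hx y hy z hz))
    (fun x hx y hy z hz => (neg_le_abs _).trans (hQ₀ x hx y hy z hz))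
    (fun s hs x y z hz => by
      have := hpde s hs x y z hz
      simp only [dT, dX4, dY4, dZ4, deriv.fun_neg] at this ⊢
      linarith)
    (fun s hs x y => (neg_le_abs _).trans (hbtop s hs x y))
    (fun s hs x y => (neg_le_abs _).trans (hbbot s hs x y))
  refine supN3_le hh fun x hx y hy z hz => abs_le.2 ⟨?_, ?_⟩
  · linarith [hlower x (Ioo_subset_Icc_self hx) y (Ioo_subset_Icc_self hy) z
      (Ioo_subset_Icc_self hz)]
  · exact hupper x (Ioo_subset_Icc_self hx) y (Ioo_subset_Icc_self hy) z (Ioo_subset_Icc_self hz)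

/-- `L^∞` bound for the temperature: if `T` solves
`∂_t T + v·∇_H T + w ∂_z T − (1/R₃) ∂_{zz} T = Q` on `[0,t]` with divergence-free
velocity and `|T| ≤ 1` on the top and bottom boundaries, then
`‖T(t)‖_∞ ≤ 1 + ‖T(0)‖_∞ + t ‖Q‖_∞`. -/
theorem temperature_Linfty_bound
    (h R₃ t : ℝ) (hh : 0 < h) (hR : 0 < R₃) (ht : 0 ≤ t)
    (T v₁ v₂ w : ℝ → ℝ → ℝ → ℝ → ℝ) (Q : ℝ → ℝ → ℝ → ℝ)
    (hT : Smooth4 T) (hv₁ : Smooth4 v₁) (hv₂ : Smooth4 v₂) (hw : Smooth4 w)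
    (hQ : ContDiff ℝ (⊤ : ℕ∞) (fun p : ℝ × ℝ × ℝ => Q p.1 p.2.1 p.2.2))
    (hpT : Per4 T) (hpv₁ : Per4 v₁) (hpv₂ : Per4 v₂) (hpw : Per4 w)
    (hpQ : ∀ x y z : ℝ, Q (x + 1) y z = Q x y z ∧ Q x (y + 1) z = Q x y z)
    (hdiv : ∀ s x y z : ℝ, dX4 v₁ s x y z + dY4 v₂ s x y z + dZ4 w s x y z = 0)
    (hwtop : ∀ s x y : ℝ, w s x y 0 = 0)
    (hwbot : ∀ s x y : ℝ, w s x y (-h) = 0)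
    (hpde : ∀ s ∈ Set.Icc (0:ℝ) t, ∀ x y : ℝ, ∀ z ∈ Set.Icc (-h) (0:ℝ),
      dT T s x y z + v₁ s x y z * dX4 T s x y z + v₂ s x y z * dY4 T s x y z
        + w s x y z * dZ4 T s x y z - (1 / R₃) * dZ4 (dZ4 T) s x y z = Q x y z)
    (hbtop : ∀ s ∈ Set.Icc (0:ℝ) t, ∀ x y : ℝ, |T s x y 0| ≤ 1)
    (hbbot : ∀ s ∈ Set.Icc (0:ℝ) t, ∀ x y : ℝ, |T s x y (-h)| ≤ 1) :
    SupN3 h (T t) ≤ 1 + SupN3 h (T 0) + t * SupN3 h Q :=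
  temperature_Linfty_bound_general h R₃ t hh hR ht T v₁ v₂ w Q hT hQ hpT hpde hbtop hbbot
end
end

section
/- Let Ω = M × (−h,0) with M = (0,1)², and let ṽ ∈ H¹(Ω) and v̄ smooth on M. Then ∫_M (∫_{−h}^0 |ṽ|² dz)^4 dxdy)^{1/4} ≤ C ‖ṽ‖_{L⁶(Ω)}^{3/2} (‖∇_H ṽ‖_{L²(Ω)} + ‖ṽ‖_{L²(Ω)})^{1/2}. -/
open MeasureTheory Real

noncomputable section

/-- Integral over the channel `Ω = (0,1)² × (−h,0)`, written as an iterated integral. -/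
def iInt (h : ℝ) (f : ℝ → ℝ → ℝ → ℝ) : ℝ :=
  ∫ x in Set.Ioo (0:ℝ) 1, ∫ y in Set.Ioo (0:ℝ) 1, ∫ z in Set.Ioo (-h) (0:ℝ), f x y z

/-- Smoothness of a function of three real variables. -/
def Smooth3 (f : ℝ → ℝ → ℝ → ℝ) : Prop :=
  ContDiff ℝ (⊤ : ℕ∞) (fun p : ℝ × ℝ × ℝ => f p.1 p.2.1 p.2.2)

/-- Periodicity in the horizontal variables with period 1. -/
def Per3 (f : ℝ → ℝ → ℝ → ℝ) : Prop :=
  ∀ x y z : ℝ, f (x + 1) y z = f x y z ∧ f x (y + 1) z = f x y z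

/-- Horizontal partial derivative in `x`. -/
def dX (f : ℝ → ℝ → ℝ → ℝ) (x y z : ℝ) : ℝ := deriv (fun t => f t y z) x

/-- Horizontal partial derivative in `y`. -/
def dY (f : ℝ → ℝ → ℝ → ℝ) (x y z : ℝ) : ℝ := deriv (fun t => f x t z) y

/-- Vertical partial derivative in `z`. -/
def dZ (f : ℝ → ℝ → ℝ → ℝ) (x y z : ℝ) : ℝ := deriv (fun t => f x y t) z

/-- `L²(Ω)` norm. -/
def L2n (h : ℝ) (f : ℝ → ℝ → ℝ → ℝ) : ℝ :=
  (iInt h (fun x y z => (f x y z) ^ 2)) ^ ((1:ℝ) / 2)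

/-- `L^q(Ω)` norm. -/
def Lqn (h q : ℝ) (f : ℝ → ℝ → ℝ → ℝ) : ℝ :=
  (iInt h (fun x y z => |f x y z| ^ q)) ^ (1 / q)

/-!
Let `F(x,y) = ∫_{-h}^0 ψ² dz`. On a segment of length one a function is bounded by the integrals
of its modulus and of the modulus of its derivative; applied to `G = F²` along both horizontal
directions this gives Ladyzhenskaya's bound
`∫_M F⁴ ≤ (∫_M F² + ∫_M |∂ₓ(F²)|) (∫_M F² + ∫_M |∂_y(F²)|)`.
Since `F² = F ∫ |ψ| |ψ| dz` and `|∂ₓ(F²)| ≤ 4 F ∫ |ψ| |∂ₓψ| dz`, every term on the right is an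
integral over `Ω` of `F |ψ|` against `|ψ|` or `|∇_H ψ|`. Cauchy–Schwarz on `Ω` bounds it by
`(∫_M F³)^{1/2}` times an `L²(Ω)` norm, and Hölder in `z` gives `F³ ≤ h² ∫ ψ⁶ dz`, so
`(∫_M F³)^{1/2} ≤ h ‖ψ‖_{L⁶}³`. Taking fourth roots gives the constant `C = 2 √h`.
-/

open Set

theorem Continuous.integrableOn_of_isBounded {X : Type*} [MetricSpace X] [ProperSpace X]
    [MeasurableSpace X] [OpensMeasurableSpace X] {μ : Measure X} [IsLocallyFiniteMeasure μ]
    {f : X → ℝ} (hf : Continuous f) {s : Set X} (hs : Bornology.IsBounded s) :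
    IntegrableOn f s μ :=
  (hf.continuousOn.integrableOn_compact hs.isCompact_closure).mono_set subset_closure

@[fun_prop]
theorem continuous_setIntegral_Ioo {X : Type*} [TopologicalSpace X] [FirstCountableTopology X]
    [LocallyCompactSpace X] {f : X → ℝ → ℝ} (hf : Continuous ↿f) (a b : ℝ) :
    Continuous fun x => ∫ t in Ioo a b, f x t := by
  simp_rw [← integral_Icc_eq_integral_Ioo]
  exact continuous_parametric_integral_of_continuous hf isCompact_Icc

theorem hasDerivAt_setIntegral_Ioo {f f' : ℝ → ℝ → ℝ} (hf : Continuous ↿f)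
    (hf' : Continuous ↿f') (hd : ∀ t z, HasDerivAt (f · z) (f' t z) t) (a b x : ℝ) :
    HasDerivAt (fun t => ∫ z in Ioo a b, f t z) (∫ z in Ioo a b, f' x z) x := by
  obtain ⟨M, hM⟩ := ((isCompact_closedBall x 1).prod (isCompact_Icc (a := a) (b := b)))
    |>.exists_bound_of_continuousOn hf'.continuousOn
  refine (hasDerivAt_integral_of_dominated_loc_of_deriv_le (bound := fun _ => M)
    (Metric.closedBall_mem_nhds x one_pos)
    (.of_forall fun t => (hf.uncurry_left t).aestronglyMeasurable)
    ((hf.uncurry_left x).integrableOn_of_isBounded (Metric.isBounded_Ioo a b))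
    (hf'.uncurry_left x).aestronglyMeasurable ?_ (integrableOn_const measure_Ioo_lt_top.ne)
    (.of_forall fun z t _ => hd t z)).2
  filter_upwards [ae_restrict_mem measurableSet_Ioo] with z hz t ht
  exact hM (t, z) ⟨ht, Ioo_subset_Icc_self hz⟩

theorem integral_mul_le_sqrt_mul_sqrt {α : Type*} [MeasurableSpace α] {μ : Measure α}
    {f g : α → ℝ} (hf : AEStronglyMeasurable f μ) (hg : AEStronglyMeasurable g μ)
    (hf2 : Integrable (fun x => f x ^ 2) μ) (hg2 : Integrable (fun x => g x ^ 2) μ)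
    (hf0 : ∀ x, 0 ≤ f x) (hg0 : ∀ x, 0 ≤ g x) :
    ∫ x, f x * g x ∂μ ≤ √(∫ x, f x ^ 2 ∂μ) * √(∫ x, g x ^ 2 ∂μ) := by
  have := integral_mul_le_Lp_mul_Lq_of_nonneg (p := 2) (q := 2) Real.HolderConjugate.two_two
    (.of_forall hf0) (.of_forall hg0) (by simpa using (memLp_two_iff_integrable_sq hf).2 hf2)
    (by simpa using (memLp_two_iff_integrable_sq hg).2 hg2)
  simpa [Real.sqrt_eq_rpow] using this

theorem setIntegral_Ioo_sq_pow_three_le {φ : ℝ → ℝ} (hφ : Continuous φ) {a b : ℝ}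
    (hab : a ≤ b) :
    (∫ z in Ioo a b, φ z ^ 2) ^ 3 ≤ (b - a) ^ 2 * ∫ z in Ioo a b, φ z ^ 6 := by
  have hint : ∀ {f : ℝ → ℝ}, Continuous f → IntegrableOn f (Ioo a b) :=
    fun hf => hf.integrableOn_of_isBounded (Metric.isBounded_Ioo a b)
  set F := ∫ z in Ioo a b, φ z ^ 2
  set P := ∫ z in Ioo a b, φ z ^ 4
  set S := ∫ z in Ioo a b, φ z ^ 6
  have hF : 0 ≤ F := setIntegral_nonneg measurableSet_Ioo fun z _ => by positivity
  have hP : 0 ≤ P := setIntegral_nonneg measurableSet_Ioo fun z _ => by positivity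
  have hS : 0 ≤ S := setIntegral_nonneg measurableSet_Ioo fun z _ => by positivity
  have hFP : F ≤ √P * √(b - a) := by
    have := integral_mul_le_sqrt_mul_sqrt (μ := volume.restrict (Ioo a b)) (g := fun _ => 1)
      (hφ.pow 2).aestronglyMeasurable aestronglyMeasurable_const (hint (by fun_prop))
      (hint continuous_const) (fun z => sq_nonneg (φ z)) (fun _ => zero_le_one)
    simpa [← pow_mul, hab] using this
  have hPS : P ≤ √S * √F := by
    have := integral_mul_le_sqrt_mul_sqrt (μ := volume.restrict (Ioo a b))
      (f := fun z => |φ z| ^ 3) (g := fun z => |φ z|) (by fun_prop) (by fun_prop)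
      (hint (by fun_prop)) (hint (by fun_prop)) (fun z => by positivity) (fun z => abs_nonneg _)
    have e4 : ∀ r : ℝ, |r| ^ 3 * |r| = r ^ 4 := fun r => by
      rw [← pow_succ, Even.pow_abs (by decide)]
    have e6 : ∀ r : ℝ, (|r| ^ 3) ^ 2 = r ^ 6 := fun r => by
      rw [← pow_mul, Even.pow_abs (by decide)]
    simpa only [e4, e6, sq_abs] using this
  have hF2 : F ^ 2 ≤ P * (b - a) := by
    calc F ^ 2 ≤ (√P * √(b - a)) ^ 2 := pow_le_pow_left₀ hF hFP 2
      _ = P * (b - a) := by rw [mul_pow, Real.sq_sqrt hP, Real.sq_sqrt (sub_nonneg.2 hab)]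
  have hP2 : P ^ 2 ≤ S * F := by
    calc P ^ 2 ≤ (√S * √F) ^ 2 := pow_le_pow_left₀ hP hPS 2
      _ = S * F := by rw [mul_pow, Real.sq_sqrt hS, Real.sq_sqrt hF]
  have hF4 : F * F ^ 3 ≤ F * ((b - a) ^ 2 * S) := by
    calc F * F ^ 3 = (F ^ 2) ^ 2 := by ring
      _ ≤ (P * (b - a)) ^ 2 := pow_le_pow_left₀ (sq_nonneg F) hF2 2
      _ = P ^ 2 * (b - a) ^ 2 := by ring
      _ ≤ S * F * (b - a) ^ 2 := mul_le_mul_of_nonneg_right hP2 (sq_nonneg _)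
      _ = F * ((b - a) ^ 2 * S) := by ring
  rcases hF.eq_or_lt with hF0 | hF0
  · rw [← hF0, zero_pow three_ne_zero]; exact mul_nonneg (sq_nonneg _) hS
  · exact le_of_mul_le_mul_left hF4 hF0

theorem abs_le_setIntegral_abs_add_setIntegral_abs_deriv {g g' : ℝ → ℝ} (hg' : Continuous g')
    (hd : ∀ t, HasDerivAt g (g' t) t) {x : ℝ} (hx : x ∈ Icc (0 : ℝ) 1) :
    |g x| ≤ (∫ t in Ioo 0 1, |g t|) + ∫ t in Ioo 0 1, |g' t| := by
  have hg : Continuous g := continuous_iff_continuousAt.2 fun t => (hd t).continuousAt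
  obtain ⟨x₀, hx₀, hmin⟩ := isCompact_Icc.exists_isMinOn (nonempty_Icc.2 zero_le_one)
    hg.abs.continuousOn
  have hmean : |g x₀| ≤ ∫ t in Ioo 0 1, |g t| := by
    have := setIntegral_mono_on (μ := volume)
      (integrableOn_const (C := |g x₀|) measure_Ioo_lt_top.ne)
      (hg.abs.integrableOn_of_isBounded (Metric.isBounded_Ioo 0 1)) measurableSet_Ioo
      fun t ht => hmin (Ioo_subset_Icc_self ht)
    simpa using this
  have hftc : g x - g x₀ = ∫ t in x₀..x, g' t :=
    (intervalIntegral.integral_eq_sub_of_hasDerivAt (fun t _ => hd t)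
      (hg'.intervalIntegrable _ _)).symm
  have hvar : |∫ t in x₀..x, g' t| ≤ ∫ t in Ioo 0 1, |g' t| := by
    calc |∫ t in x₀..x, g' t| ≤ ∫ t in uIoc x₀ x, |g' t| :=
          by simpa only [Real.norm_eq_abs] using
            intervalIntegral.norm_integral_le_integral_norm_uIoc (f := g') (μ := volume)
      _ ≤ ∫ t in Ioc 0 1, |g' t| :=
          setIntegral_mono_set (hg'.abs.integrableOn_Ioc) (.of_forall fun t => abs_nonneg _)
            (Ioc_subset_Ioc (le_min hx₀.1 hx.1) (max_le hx₀.2 hx.2)).eventuallyLE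
      _ = ∫ t in Ioo 0 1, |g' t| := integral_Ioc_eq_integral_Ioo
  calc |g x| = |g x₀ + (g x - g x₀)| := by ring_nf
    _ ≤ |g x₀| + |g x - g x₀| := abs_add_le _ _
    _ ≤ _ := by rw [hftc]; exact add_le_add hmean hvar

section Fubini

variable {X Y : Type*} [MetricSpace X] [ProperSpace X] [MeasureSpace X] [BorelSpace X]
  [IsLocallyFiniteMeasure (volume : Measure X)]
  [SFinite (volume : Measure X)]
  [MetricSpace Y] [ProperSpace Y] [MeasureSpace Y] [BorelSpace Y]
  [SecondCountableTopology Y] [IsLocallyFiniteMeasure (volume : Measure Y)]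
  [SFinite (volume : Measure Y)]
  {f : X × Y → ℝ} {s : Set X} {t : Set Y}

theorem setIntegral_prod_of_continuous (hf : Continuous f) (hs : Bornology.IsBounded s)
    (ht : Bornology.IsBounded t) :
    ∫ q in s ×ˢ t, f q = ∫ x in s, ∫ y in t, f (x, y) :=
  setIntegral_prod f (hf.integrableOn_of_isBounded (hs.prod ht))

theorem setIntegral_prod_swap_of_continuous (hf : Continuous f) (hs : Bornology.IsBounded s)
    (ht : Bornology.IsBounded t) :
    ∫ q in s ×ˢ t, f q = ∫ y in t, ∫ x in s, f (x, y) := by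
  rw [setIntegral_prod_of_continuous hf hs ht]
  have hint := hf.integrableOn_of_isBounded (μ := volume) (hs.prod ht)
  rw [Measure.volume_eq_prod, IntegrableOn, ← Measure.prod_restrict] at hint
  exact integral_integral_swap hint

end Fubini

theorem setIntegral_unitSquare_sq_le {G Gx Gy : ℝ × ℝ → ℝ} (hG : Continuous G)
    (hGx : Continuous Gx) (hGy : Continuous Gy)
    (hdx : ∀ x y, HasDerivAt (fun t => G (t, y)) (Gx (x, y)) x)
    (hdy : ∀ x y, HasDerivAt (fun t => G (x, t)) (Gy (x, y)) y) :
    ∫ p in Ioo 0 1 ×ˢ Ioo 0 1, G p ^ 2 ≤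
      ((∫ p in Ioo 0 1 ×ˢ Ioo 0 1, |G p|) + ∫ p in Ioo 0 1 ×ˢ Ioo 0 1, |Gx p|) *
        ((∫ p in Ioo 0 1 ×ˢ Ioo 0 1, |G p|) + ∫ p in Ioo 0 1 ×ˢ Ioo 0 1, |Gy p|) := by
  have hI := Metric.isBounded_Ioo (0 : ℝ) 1
  set A : ℝ → ℝ := fun y => (∫ x in Ioo 0 1, |G (x, y)|) + ∫ x in Ioo 0 1, |Gx (x, y)|
  set B : ℝ → ℝ := fun x => (∫ y in Ioo 0 1, |G (x, y)|) + ∫ y in Ioo 0 1, |Gy (x, y)|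
  have hGA : ∀ x ∈ Icc (0 : ℝ) 1, ∀ y, |G (x, y)| ≤ A y := fun x hx y =>
    abs_le_setIntegral_abs_add_setIntegral_abs_deriv (g := fun t => G (t, y))
      (hGx.comp (by fun_prop)) (fun t => hdx t y) hx
  have hGB : ∀ x, ∀ y ∈ Icc (0 : ℝ) 1, |G (x, y)| ≤ B x := fun x y hy =>
    abs_le_setIntegral_abs_add_setIntegral_abs_deriv (g := fun t => G (x, t))
      (hGy.comp (by fun_prop)) (fun t => hdy x t) hy
  have hAc : Continuous A := by fun_prop
  have hBc : Continuous B := by fun_prop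
  have hint : ∀ {f : ℝ → ℝ}, Continuous f → IntegrableOn f (Ioo 0 1) := fun hf =>
    hf.integrableOn_of_isBounded hI
  have hAint : ∫ y in Ioo 0 1, A y =
      (∫ p in Ioo 0 1 ×ˢ Ioo 0 1, |G p|) + ∫ p in Ioo 0 1 ×ˢ Ioo 0 1, |Gx p| := by
    rw [integral_add (hint (by fun_prop)) (hint (by fun_prop)),
      setIntegral_prod_swap_of_continuous hG.abs hI hI,
      setIntegral_prod_swap_of_continuous hGx.abs hI hI]
  have hBint : ∫ x in Ioo 0 1, B x =
      (∫ p in Ioo 0 1 ×ˢ Ioo 0 1, |G p|) + ∫ p in Ioo 0 1 ×ˢ Ioo 0 1, |Gy p| := by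
    rw [integral_add (hint (by fun_prop)) (hint (by fun_prop)),
      setIntegral_prod_of_continuous hG.abs hI hI,
      setIntegral_prod_of_continuous hGy.abs hI hI]
  -- `G(x,y)² ≤ A(y) B(x)`, and the right-hand side integrates to a product.
  calc ∫ p in Ioo 0 1 ×ˢ Ioo 0 1, G p ^ 2
      ≤ ∫ p in Ioo 0 1 ×ˢ Ioo 0 1, B p.1 * A p.2 := by
        refine setIntegral_mono_on (Continuous.integrableOn_of_isBounded (by fun_prop) (hI.prod hI))
          (Continuous.integrableOn_of_isBounded (by fun_prop) (hI.prod hI))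
          (measurableSet_Ioo.prod measurableSet_Ioo) fun p hp => ?_
        have hx := Ioo_subset_Icc_self hp.1
        have hy := Ioo_subset_Icc_self hp.2
        rw [← sq_abs, sq]
        exact mul_le_mul (hGB p.1 p.2 hy) (hGA p.1 hx p.2) (abs_nonneg _)
          ((abs_nonneg _).trans (hGB p.1 p.2 hy))
    _ = (∫ x in Ioo 0 1, B x) * ∫ y in Ioo 0 1, A y := by
        rw [Measure.volume_eq_prod, setIntegral_prod_mul]
    _ = _ := by rw [hAint, hBint, mul_comm]

theorem setIntegral_verticalMass_mul_le {u w : ℝ × ℝ → ℝ → ℝ} (hu : Continuous ↿u)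
    (hw : Continuous ↿w) {s : Set (ℝ × ℝ)} (hs : Bornology.IsBounded s) {a b : ℝ}
    (hab : a ≤ b) :
    ∫ p in s, (∫ z in Ioo a b, u p z ^ 2) * ∫ z in Ioo a b, |u p z| * |w p z| ≤
      (b - a) * √(∫ q in s ×ˢ Ioo a b, u q.1 q.2 ^ 6) *
        √(∫ q in s ×ˢ Ioo a b, w q.1 q.2 ^ 2) := by
  have hJ := Metric.isBounded_Ioo a b
  set F : ℝ × ℝ → ℝ := fun p => ∫ z in Ioo a b, u p z ^ 2
  have hF : Continuous F := by fun_prop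
  have hint : ∀ {f : (ℝ × ℝ) × ℝ → ℝ}, Continuous f →
      IntegrableOn f (s ×ˢ Ioo a b) :=
    fun hf => hf.integrableOn_of_isBounded (hs.prod hJ)
  have hcube : ∫ q in s ×ˢ Ioo a b, (F q.1 * |u q.1 q.2|) ^ 2 ≤
      (b - a) ^ 2 * ∫ q in s ×ˢ Ioo a b, u q.1 q.2 ^ 6 := by
    rw [setIntegral_prod_of_continuous (by fun_prop) hs hJ,
      setIntegral_prod_of_continuous (by fun_prop) hs hJ, ← integral_const_mul]
    refine setIntegral_mono
      (Continuous.integrableOn_of_isBounded (by fun_prop) hs)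
      (Continuous.integrableOn_of_isBounded (by fun_prop) hs)
      fun p => ?_
    calc ∫ z in Ioo a b, (F p * |u p z|) ^ 2 = F p ^ 3 := by
          simp_rw [mul_pow, sq_abs]; rw [integral_const_mul]; ring
      _ ≤ (b - a) ^ 2 * ∫ z in Ioo a b, u p z ^ 6 :=
          setIntegral_Ioo_sq_pow_three_le (hu.uncurry_left p) hab
  calc ∫ p in s, F p * ∫ z in Ioo a b, |u p z| * |w p z|
      = ∫ q in s ×ˢ Ioo a b, F q.1 * |u q.1 q.2| * |w q.1 q.2| := by
        rw [setIntegral_prod_of_continuous (by fun_prop) hs hJ]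
        simp_rw [mul_assoc, integral_const_mul]
    _ ≤ √(∫ q in s ×ˢ Ioo a b, (F q.1 * |u q.1 q.2|) ^ 2) *
          √(∫ q in s ×ˢ Ioo a b, |w q.1 q.2| ^ 2) :=
        integral_mul_le_sqrt_mul_sqrt (by fun_prop) (by fun_prop) (hint (by fun_prop))
          (hint (by fun_prop)) (fun q => by positivity) (fun q => abs_nonneg _)
    _ ≤ √((b - a) ^ 2 * ∫ q in s ×ˢ Ioo a b, u q.1 q.2 ^ 6) *
          √(∫ q in s ×ˢ Ioo a b, w q.1 q.2 ^ 2) := by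
        simp_rw [sq_abs]; gcongr
    _ = _ := by rw [Real.sqrt_mul (sq_nonneg _), Real.sqrt_sq (sub_nonneg.2 hab)]

theorem setIntegral_verticalMass_sq_add_le {u d : ℝ × ℝ → ℝ → ℝ} (hu : Continuous ↿u)
    (hd : Continuous ↿d) {s : Set (ℝ × ℝ)} (hs : Bornology.IsBounded s) {a b : ℝ}
    (hab : a ≤ b) :
    (∫ p in s, (∫ z in Ioo a b, u p z ^ 2) ^ 2) +
        ∫ p in s, |2 * (∫ z in Ioo a b, u p z ^ 2) * ∫ z in Ioo a b, 2 * u p z * d p z| ≤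
      (b - a) * √(∫ q in s ×ˢ Ioo a b, u q.1 q.2 ^ 6) *
        (√(∫ q in s ×ˢ Ioo a b, u q.1 q.2 ^ 2) +
          4 * √(∫ q in s ×ˢ Ioo a b, d q.1 q.2 ^ 2)) := by
  have hmass := setIntegral_verticalMass_mul_le hu hu hs hab
  have hderiv := setIntegral_verticalMass_mul_le hu hd hs hab
  simp_rw [abs_mul_abs_self, ← sq] at hmass
  have hpt : ∀ p, |2 * (∫ z in Ioo a b, u p z ^ 2) * ∫ z in Ioo a b, 2 * u p z * d p z| ≤
      4 * ((∫ z in Ioo a b, u p z ^ 2) * ∫ z in Ioo a b, |u p z| * |d p z|) := fun p => by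
    have hF : 0 ≤ ∫ z in Ioo a b, u p z ^ 2 :=
      setIntegral_nonneg measurableSet_Ioo fun z _ => sq_nonneg _
    calc |2 * (∫ z in Ioo a b, u p z ^ 2) * ∫ z in Ioo a b, 2 * u p z * d p z|
        = 2 * (∫ z in Ioo a b, u p z ^ 2) * |∫ z in Ioo a b, 2 * u p z * d p z| := by
          rw [abs_mul, abs_of_nonneg (by positivity)]
      _ ≤ 2 * (∫ z in Ioo a b, u p z ^ 2) * ∫ z in Ioo a b, |2 * u p z * d p z| := by
          gcongr; exact abs_integral_le_integral_abs
      _ = _ := by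
          simp_rw [abs_mul, abs_two, mul_assoc, integral_const_mul]; ring
  have hint : ∀ {f : ℝ × ℝ → ℝ}, Continuous f → IntegrableOn f s := fun hf =>
    hf.integrableOn_of_isBounded hs
  have hderiv' := setIntegral_mono (hint (by fun_prop)) (hint (by fun_prop)) hpt
  rw [integral_const_mul] at hderiv'
  nlinarith

theorem rpow_one_fourth_eq_sqrt_sqrt {x : ℝ} (hx : 0 ≤ x) : x ^ (1 / 4 : ℝ) = √√x := by
  rw [Real.sqrt_eq_rpow, Real.sqrt_eq_rpow, ← Real.rpow_mul hx]; norm_num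

theorem rpow_one_fourth_le_of_le_mul {P h K L Dx Dy : ℝ} (hP : 0 ≤ P) (hh : 0 ≤ h)
    (hK : 0 ≤ K) (hDx : 0 ≤ Dx) (hDy : 0 ≤ Dy)
    (hle : P ≤ h * √K * (√L + 4 * √Dx) * (h * √K * (√L + 4 * √Dy))) :
    P ^ (1 / 4 : ℝ) ≤ 2 * √h * (K ^ (1 / 6 : ℝ)) ^ (3 / 2 : ℝ) *
      ((Dx + Dy) ^ (1 / 2 : ℝ) + L ^ (1 / 2 : ℝ)) ^ (1 / 2 : ℝ) := by
  set S := √(Dx + Dy) + √L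
  have hx : √L + 4 * √Dx ≤ 4 * S := by
    have := Real.sqrt_le_sqrt (by linarith : Dx ≤ Dx + Dy); linarith [Real.sqrt_nonneg L]
  have hy : √L + 4 * √Dy ≤ 4 * S := by
    have := Real.sqrt_le_sqrt (by linarith : Dy ≤ Dx + Dy); linarith [Real.sqrt_nonneg L]
  have hP' : P ≤ (4 * h * √K * S) ^ 2 := by
    refine hle.trans ?_
    calc _ = (h * √K) ^ 2 * ((√L + 4 * √Dx) * (√L + 4 * √Dy)) := by ring
      _ ≤ (h * √K) ^ 2 * (4 * S * (4 * S)) := by gcongr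
      _ = _ := by ring
  have hK4 : (K ^ (1 / 6 : ℝ)) ^ (3 / 2 : ℝ) = √√K := by
    rw [← Real.rpow_mul hK, ← rpow_one_fourth_eq_sqrt_sqrt hK]; norm_num
  rw [rpow_one_fourth_eq_sqrt_sqrt hP, hK4, ← Real.sqrt_eq_rpow, ← Real.sqrt_eq_rpow,
    ← Real.sqrt_eq_rpow]
  calc √√P ≤ √√((4 * h * √K * S) ^ 2) := by gcongr
    _ = √(4 * h * √K * S) := by rw [Real.sqrt_sq (by positivity)]
    _ = 2 * √h * √√K * √S := by
      rw [Real.sqrt_mul (by positivity), Real.sqrt_mul (by positivity),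
        Real.sqrt_mul (by positivity), show √4 = 2 by
          rw [show (4 : ℝ) = 2 ^ 2 by norm_num, Real.sqrt_sq zero_le_two]]

theorem hasDerivAt_sq_setIntegral_Ioo_sq {f f' : ℝ → ℝ → ℝ} (hf : Continuous ↿f)
    (hf' : Continuous ↿f') (hd : ∀ t z, HasDerivAt (f · z) (f' t z) t) (a b x : ℝ) :
    HasDerivAt (fun t => (∫ z in Ioo a b, f t z ^ 2) ^ 2)
      (2 * (∫ z in Ioo a b, f x z ^ 2) * ∫ z in Ioo a b, 2 * f x z * f' x z) x := by
  have := (hasDerivAt_setIntegral_Ioo (f := fun t z => f t z ^ 2)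
    (f' := fun t z => 2 * f t z * f' t z) (by fun_prop) (by fun_prop)
    (fun t z => by simpa using (hd t z).fun_pow 2) a b x).fun_pow 2
  simpa using this

theorem iInt_eq_setIntegral {f : ℝ → ℝ → ℝ → ℝ}
    (hf : Continuous fun q : ℝ × ℝ × ℝ => f q.1 q.2.1 q.2.2) (h : ℝ) :
    iInt h f = ∫ q in (Ioo 0 1 ×ˢ Ioo 0 1) ×ˢ Ioo (-h) 0, f q.1.1 q.1.2 q.2 := by
  have hI := Metric.isBounded_Ioo (0 : ℝ) 1
  rw [setIntegral_prod_of_continuous (by fun_prop) (hI.prod hI) (Metric.isBounded_Ioo _ _),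
    setIntegral_prod_of_continuous (f := fun p : ℝ × ℝ => ∫ z in Ioo (-h) 0, f p.1 p.2 z)
      (by fun_prop) hI hI]
  rfl

namespace Smooth3

variable {ψ : ℝ → ℝ → ℝ → ℝ} (hψ : Smooth3 ψ)
include hψ

theorem continuous : Continuous fun q : ℝ × ℝ × ℝ => ψ q.1 q.2.1 q.2.2 :=
  ContDiff.continuous hψ

theorem differentiable : Differentiable ℝ fun q : ℝ × ℝ × ℝ => ψ q.1 q.2.1 q.2.2 :=
  ContDiff.differentiable hψ (by simp)

theorem hasDerivAt_dX (x y z : ℝ) : HasDerivAt (fun t => ψ t y z) (dX ψ x y z) x :=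
  (hψ.differentiable.differentiableAt.comp x
    (by fun_prop : DifferentiableAt ℝ (fun t : ℝ => (t, y, z)) x)).hasDerivAt

theorem hasDerivAt_dY (x y z : ℝ) : HasDerivAt (fun t => ψ x t z) (dY ψ x y z) y :=
  (hψ.differentiable.differentiableAt.comp y
    (by fun_prop : DifferentiableAt ℝ (fun t : ℝ => (x, t, z)) y)).hasDerivAt

theorem continuous_dX : Continuous fun q : ℝ × ℝ × ℝ => dX ψ q.1 q.2.1 q.2.2 := by
  refine ((ContDiff.continuous_fderiv hψ (by simp)).clm_apply
    (continuous_const (y := ((1 : ℝ), (0 : ℝ), (0 : ℝ))))).congr fun q => ?_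
  exact ((hψ.differentiable q).hasFDerivAt.comp_hasDerivAt q.1
    ((hasDerivAt_id q.1).prodMk (hasDerivAt_const q.1 q.2))).deriv.symm

theorem continuous_dY : Continuous fun q : ℝ × ℝ × ℝ => dY ψ q.1 q.2.1 q.2.2 := by
  refine ((ContDiff.continuous_fderiv hψ (by simp)).clm_apply
    (continuous_const (y := ((0 : ℝ), (1 : ℝ), (0 : ℝ))))).congr fun q => ?_
  exact ((hψ.differentiable q).hasFDerivAt.comp_hasDerivAt q.2.1
    ((hasDerivAt_const q.2.1 q.1).prodMk
      ((hasDerivAt_id q.2.1).prodMk (hasDerivAt_const q.2.1 q.2.2)))).deriv.symm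

end Smooth3

/-- On `Ω = (0,1)² × (−h,0)`:
`(∫_M (∫_{−h}^0 |ṽ|² dz)⁴)^{1/4} ≤ C ‖ṽ‖_{L⁶}^{3/2} (‖∇_H ṽ‖_{L²} + ‖ṽ‖_{L²})^{1/2}`. -/
theorem anisotropic_L2_power4 (h : ℝ) (hh : 0 < h) :
    ∃ C > (0:ℝ), ∀ ψ : ℝ → ℝ → ℝ → ℝ, Smooth3 ψ → Per3 ψ →
      (∫ x in Set.Ioo (0:ℝ) 1, ∫ y in Set.Ioo (0:ℝ) 1,
          (∫ z in Set.Ioo (-h) (0:ℝ), (ψ x y z) ^ 2) ^ 4) ^ ((1:ℝ) / 4) ≤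
        C * (Lqn h 6 ψ) ^ ((3:ℝ) / 2)
          * ((iInt h (fun x y z => (dX ψ x y z) ^ 2 + (dY ψ x y z) ^ 2)) ^ ((1:ℝ) / 2)
              + L2n h ψ) ^ ((1:ℝ) / 2) := by
  refine ⟨2 * √h, by positivity, fun ψ hψ _ => ?_⟩
  have hc := hψ.continuous
  have hcx := hψ.continuous_dX
  have hcy := hψ.continuous_dY
  have hI := Metric.isBounded_Ioo (0 : ℝ) 1
  have hh' : -h ≤ 0 := by linarith
  set F : ℝ × ℝ → ℝ := fun p => ∫ z in Ioo (-h) 0, ψ p.1 p.2 z ^ 2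
  have hF : Continuous F := by fun_prop
  have hsq := setIntegral_unitSquare_sq_le (G := fun p => F p ^ 2)
    (Gx := fun p => 2 * F p * ∫ z in Ioo (-h) 0, 2 * ψ p.1 p.2 z * dX ψ p.1 p.2 z)
    (Gy := fun p => 2 * F p * ∫ z in Ioo (-h) 0, 2 * ψ p.1 p.2 z * dY ψ p.1 p.2 z)
    (by fun_prop) (by fun_prop) (by fun_prop)
    (fun x y => hasDerivAt_sq_setIntegral_Ioo_sq (f := fun t z => ψ t y z) (by fun_prop)
      (by fun_prop) (fun t z => hψ.hasDerivAt_dX t y z) _ _ x)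
    (fun x y => hasDerivAt_sq_setIntegral_Ioo_sq (f := fun t z => ψ x t z) (by fun_prop)
      (by fun_prop) (fun t z => hψ.hasDerivAt_dY x t z) _ _ y)
  have hx := setIntegral_verticalMass_sq_add_le (u := fun p z => ψ p.1 p.2 z)
    (d := fun p z => dX ψ p.1 p.2 z) (by fun_prop) (by fun_prop) (hI.prod hI) hh'
  have hy := setIntegral_verticalMass_sq_add_le (u := fun p z => ψ p.1 p.2 z)
    (d := fun p z => dY ψ p.1 p.2 z) (by fun_prop) (by fun_prop) (hI.prod hI) hh'
  simp only [abs_of_nonneg (sq_nonneg (F _)), sub_neg_eq_add, zero_add] at hsq hx hy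
  have hP := hsq.trans (mul_le_mul hx hy (by positivity) (by positivity))
  have hLHS : (∫ x in Ioo (0:ℝ) 1, ∫ y in Ioo (0:ℝ) 1,
      (∫ z in Ioo (-h) (0:ℝ), ψ x y z ^ 2) ^ 4) =
        ∫ p in Ioo 0 1 ×ˢ Ioo 0 1, (F p ^ 2) ^ 2 := by
    rw [setIntegral_prod_of_continuous (by fun_prop) hI hI]
    simp_rw [← pow_mul]; rfl
  have h6 : ∀ r : ℝ, |r| ^ (6 : ℝ) = r ^ 6 := fun r => by
    rw [show (6 : ℝ) = (6 : ℕ) by norm_num, Real.rpow_natCast, Even.pow_abs (by decide)]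
  unfold Lqn L2n
  simp only [h6]
  rw [hLHS, iInt_eq_setIntegral (by fun_prop), iInt_eq_setIntegral (by fun_prop),
    iInt_eq_setIntegral (by fun_prop), integral_add]
  · exact rpow_one_fourth_le_of_le_mul (integral_nonneg fun p => by positivity) hh.le
      (integral_nonneg fun q => by positivity) (integral_nonneg fun q => by positivity)
      (integral_nonneg fun q => by positivity) hP
  all_goals
    exact Continuous.integrableOn_of_isBounded (by fun_prop)
      ((hI.prod hI).prod (Metric.isBounded_Ioo _ _))
end
end
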